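/- arXiv:1811.07725 — 5 statements merged into one kernel-verified Lean document; each statement's English description precedes it below -/
import Mathlib

section
/- Let m be an even positive integer, let (λ,ν) ∈ F_{2^{m-1}} × F_2 be fixed, and let f be a Boolean function on F_{2^{m-1}} × F_2 satisfying f(x₁, x₂+1) + f(x₁, x₂) = Tr^{m−1}_1(λ x₁) + ν for all (x₁,x₂). Then the following three statements are equivalent: (1) f is a cyclic bent function; (2) for every b ∈ F_{2^{m-1}} \ {1}, the function (x₁,x₂) ↦ f(x₁,x₂) + f(b x₁, x₂) is bent; (3) f is bent and for every b ∈ F_{2^{m-1}} \ F_2, the function (x₁,x₂) ↦ f(x₁,x₂) + f(b x₁, x₂) is bent. -/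
open Finset

noncomputable section

abbrev Fq (n : ℕ) := GaloisField 2 n

noncomputable instance (n : ℕ) : Fintype (Fq n) := Fintype.ofFinite _

/-- Absolute trace from `F_{2^n}` to `F_2`. -/
noncomputable def tr1 (n : ℕ) (x : Fq n) : ZMod 2 :=
  Algebra.trace (ZMod 2) (Fq n) x

/-- `(-1)^x` for `x : F_2`, as an integer. -/
def chi (x : ZMod 2) : ℤ := (-1 : ℤ) ^ x.val

/-- Walsh transform of a Boolean function on `F_{2^n} × F_2`. -/
noncomputable def walsh (n : ℕ) (f : Fq n × ZMod 2 → ZMod 2)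
    (lam : Fq n) (nu : ZMod 2) : ℤ :=
  ∑ x : Fq n × ZMod 2, chi (f x + tr1 n (lam * x.1) + nu * x.2)

/-- A Boolean function on `F_{2^{m-1}} × F_2` is bent if all its Walsh coefficients
are `± 2^(m/2)`. -/
def IsBent (m : ℕ) (f : Fq (m - 1) × ZMod 2 → ZMod 2) : Prop :=
  ∀ lam nu, walsh (m - 1) f lam nu = 2 ^ (m / 2) ∨ walsh (m - 1) f lam nu = -(2 ^ (m / 2))

/-- Cyclic bent function on `F_{2^{m-1}} × F_2`. -/
def IsCyclicBent (m : ℕ) (f : Fq (m - 1) × ZMod 2 → ZMod 2) : Prop :=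
  ∀ a b : Fq (m - 1), a ≠ b → ∀ ε : ZMod 2,
    IsBent m fun x => f (a * x.1, x.2) + f (b * x.1, x.2 + ε)

lemma chi_add : ∀ a b : ZMod 2, chi (a + b) = chi a * chi b := by decide

lemma tr1_add (n : ℕ) (x y : Fq n) : tr1 n (x + y) = tr1 n x + tr1 n y := by
  simp [tr1, map_add]

lemma tr1_zero (n : ℕ) : tr1 n 0 = 0 := by simp [tr1]

lemma walsh_add_affine (n : ℕ) (f : Fq n × ZMod 2 → ZMod 2) (μ : Fq n) (c d : ZMod 2)
    (lam : Fq n) (nu : ZMod 2) :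
    walsh n (fun x => f x + (tr1 n (μ * x.1) + c * x.2 + d)) lam nu
      = chi d * walsh n f (lam + μ) (nu + c) := by
  unfold walsh
  rw [Finset.mul_sum]
  refine Finset.sum_congr rfl fun x _ => ?_
  have htr : tr1 n ((lam + μ) * x.1) = tr1 n (lam * x.1) + tr1 n (μ * x.1) := by
    rw [add_mul, tr1_add]
  have key : f x + (tr1 n (μ * x.1) + c * x.2 + d) + tr1 n (lam * x.1) + nu * x.2
      = d + (f x + tr1 n ((lam + μ) * x.1) + (nu + c) * x.2) := by
    rw [htr]; ring
  rw [key, chi_add]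

lemma walsh_scale (n : ℕ) (g : Fq n × ZMod 2 → ZMod 2) (a : Fq n) (ha : a ≠ 0)
    (lam : Fq n) (nu : ZMod 2) :
    walsh n (fun x => g (a * x.1, x.2)) lam nu = walsh n g (a⁻¹ * lam) nu := by
  unfold walsh
  refine Fintype.sum_equiv ((Equiv.mulLeft₀ a ha).prodCongr (Equiv.refl _)) _ _ fun x => ?_
  simp only [Equiv.prodCongr_apply, Equiv.coe_refl, Prod.map, Equiv.mulLeft₀_apply, id]
  have h1 : a⁻¹ * lam * (a * x.1) = lam * x.1 := by field_simp
  rw [h1]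


lemma chi_pm : ∀ d : ZMod 2, chi d = 1 ∨ chi d = -1 := by decide

lemma zmod2_helper : ∀ a b c : ZMod 2, a + b = c → a = b + c := by decide

lemma zmod2_helper2 : ∀ a b c : ZMod 2, a + b = c → a = c + b := by decide

lemma zmod2_two : ∀ ε : ZMod 2, ε = 0 ∨ ε = 1 := by decide

lemma isBent_add_affine (m : ℕ) (f : Fq (m - 1) × ZMod 2 → ZMod 2)
    (μ : Fq (m - 1)) (c d : ZMod 2) :
    IsBent m (fun x => f x + (tr1 (m - 1) (μ * x.1) + c * x.2 + d)) ↔ IsBent m f := by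
  have key := walsh_add_affine (m - 1) f μ c d
  constructor
  · intro h lam nu
    have h2 := h (lam + μ) (nu + c)
    rw [key] at h2
    simp only [add_assoc, CharTwo.add_self_eq_zero, add_zero] at h2
    rcases chi_pm d with hd | hd <;> rw [hd] at h2 <;> rcases h2 with h2 | h2
    · left; linarith
    · right; linarith
    · right; linarith
    · left; linarith
  · intro h lam nu
    rw [key]
    rcases chi_pm d with hd | hd <;> rw [hd] <;> rcases h (lam + μ) (nu + c) with h2 | h2
    · left; linarith
    · right; linarith
    · right; linarith
    · left; linarith

lemma isBent_scale (m : ℕ) (g : Fq (m - 1) × ZMod 2 → ZMod 2) (a : Fq (m - 1)) (ha : a ≠ 0) :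
    IsBent m (fun x => g (a * x.1, x.2)) ↔ IsBent m g := by
  constructor
  · intro h lam nu
    have h2 := h (a * lam) nu
    rwa [walsh_scale _ _ a ha, ← mul_assoc, inv_mul_cancel₀ ha, one_mul] at h2
  · intro h lam nu
    rw [walsh_scale _ _ a ha]
    exact h _ _

/-- Characterization of cyclic bent functions among functions whose
derivative in the second variable is the fixed affine function
`Tr(λ x₁) + ν`: three conditions are equivalent. -/
theorem stmt1 (m : ℕ) (hm : Even m) (hm0 : 0 < m)
    (lam : Fq (m - 1)) (nu : ZMod 2)
    (f : Fq (m - 1) × ZMod 2 → ZMod 2)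
    (hf : ∀ x₁ : Fq (m - 1), ∀ x₂ : ZMod 2,
      f (x₁, x₂ + 1) + f (x₁, x₂) = tr1 (m - 1) (lam * x₁) + nu) :
    (IsCyclicBent m f ↔
      ∀ b : Fq (m - 1), b ≠ 1 → IsBent m fun x => f x + f (b * x.1, x.2)) ∧
    (IsCyclicBent m f ↔
      (IsBent m f ∧
        ∀ b : Fq (m - 1), b ≠ 0 → b ≠ 1 →
          IsBent m fun x => f x + f (b * x.1, x.2))) := by
  have h00 := hf 0 0
  rw [mul_zero, tr1_zero, zero_add, zero_add] at h00
  -- h00 : f (0, 1) + f (0, 0) = nu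
  have hf0 : ∀ x₂ : ZMod 2, f (0, x₂) = nu * x₂ + f (0, 0) := by
    intro x₂
    rcases zmod2_two x₂ with h | h <;> subst h
    · rw [mul_zero, zero_add]
    · rw [mul_one]
      exact zmod2_helper2 _ _ _ h00
  have hstep : ∀ x₁ x₂, f (x₁, x₂ + 1) = f (x₁, x₂) + (tr1 (m - 1) (lam * x₁) + nu) :=
    fun x₁ x₂ => zmod2_helper _ _ _ (hf x₁ x₂)
  have hP0 : (IsBent m fun x => f x + f (0 * x.1, x.2)) ↔ IsBent m f := by
    have he : (fun x : Fq (m - 1) × ZMod 2 => f x + f (0 * x.1, x.2))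
        = fun x => f x + (tr1 (m - 1) ((0 : Fq (m - 1)) * x.1) + nu * x.2 + f (0, 0)) := by
      funext x
      rw [zero_mul, tr1_zero, zero_add, hf0 x.2]
    rw [he, isBent_add_affine]
  have main : IsCyclicBent m f ↔
      ∀ b : Fq (m - 1), b ≠ 1 → IsBent m fun x => f x + f (b * x.1, x.2) := by
    constructor
    · intro h b hb
      have h2 := h 1 b (fun e => hb e.symm) 0
      have he : (fun x : Fq (m - 1) × ZMod 2 => f (1 * x.1, x.2) + f (b * x.1, x.2 + 0))
          = fun x => f x + f (b * x.1, x.2) := by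
        funext x; rw [one_mul, add_zero]
      rwa [he] at h2
    · intro h
      have h0 : ∀ a b : Fq (m - 1), a ≠ b →
          IsBent m fun x => f (a * x.1, x.2) + f (b * x.1, x.2) := by
        intro a b hab
        by_cases ha : a = 0
        · subst ha
          have hb : b ≠ 0 := fun e => hab e.symm
          have he : (fun x : Fq (m - 1) × ZMod 2 => f (0 * x.1, x.2) + f (b * x.1, x.2))
              = fun x => (fun y : Fq (m - 1) × ZMod 2 => f (b * y.1, y.2)) x
                  + (tr1 (m - 1) ((0 : Fq (m - 1)) * x.1) + nu * x.2 + f (0, 0)) := by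
            funext x
            simp only
            rw [zero_mul, tr1_zero, zero_add, hf0 x.2]
            ring
          rw [he]
          exact (isBent_add_affine m (fun y => f (b * y.1, y.2)) 0 nu (f (0, 0))).mpr
            ((isBent_scale m f b hb).mpr (hP0.mp (h 0 zero_ne_one)))
        · have hc : b * a⁻¹ ≠ 1 := by
            intro e
            apply hab
            have : b = a := by
              field_simp at e
              exact e
            exact this.symm
          have he : (fun x : Fq (m - 1) × ZMod 2 => f (a * x.1, x.2) + f (b * x.1, x.2))
              = fun x => (fun y : Fq (m - 1) × ZMod 2 =>
                  f y + f ((b * a⁻¹) * y.1, y.2)) (a * x.1, x.2) := by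
            funext x
            simp only
            have h1 : b * a⁻¹ * (a * x.1) = b * x.1 := by
              field_simp
            rw [h1]
          rw [he]
          exact (isBent_scale m (fun y => f y + f ((b * a⁻¹) * y.1, y.2)) a ha).mpr
            (h (b * a⁻¹) hc)
      intro a b hab ε
      rcases zmod2_two ε with hε | hε <;> subst hε
      · have he : (fun x : Fq (m - 1) × ZMod 2 => f (a * x.1, x.2) + f (b * x.1, x.2 + 0))
            = fun x => f (a * x.1, x.2) + f (b * x.1, x.2) := by
          funext x; rw [add_zero]
        rw [he]; exact h0 a b hab
      · have he : (fun x : Fq (m - 1) × ZMod 2 => f (a * x.1, x.2) + f (b * x.1, x.2 + 1))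
            = fun x => (fun y : Fq (m - 1) × ZMod 2 => f (a * y.1, y.2) + f (b * y.1, y.2)) x
                + (tr1 (m - 1) ((lam * b) * x.1) + 0 * x.2 + nu) := by
          funext x
          simp only
          rw [hstep (b * x.1) x.2, mul_assoc]
          ring
        rw [he]
        exact (isBent_add_affine m (fun y => f (a * y.1, y.2) + f (b * y.1, y.2))
          (lam * b) 0 nu).mpr (h0 a b hab)
  refine ⟨main, main.trans ?_⟩
  constructor
  · intro h
    exact ⟨hP0.mp (h 0 zero_ne_one), fun b _ hb1 => h b hb1⟩
  · rintro ⟨hbent, hrest⟩ b hb1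
    by_cases hb0 : b = 0
    · subst hb0; exact hP0.mpr hbent
    · exact hrest b hb0 hb1
end
end

section
/- Let m be an even positive integer and let f be a cyclic bent function on F_{2^{m−1}} × F_2. For a ∈ F_{2^{m−1}} define B_a = { v_{a,λ} : λ ∈ F_{2^{m−1}} } ⊂ ℂ^{2^{m−1}}, where v_{a,λ} has coordinates ( ρ₀ (−1)^{f(ax,0)} + ρ₁ (−1)^{f(ax,1)} ) (−1)^{Tr^{m−1}_1(λ x)} / √(2^{m−1}) for x ∈ F_{2^{m−1}}, with ρ₀ = (1+i)/2 and ρ₁ = (1−i)/2, and let B_∞ be the standard basis of ℂ^{2^{m−1}}. Then each B_a is an orthonormal basis of ℂ^{2^{m−1}}, and the 2^{m−1}+1 bases B_∞ and B_a (a ∈ F_{2^{m−1}}) are pairwise mutually unbiased: whenever v and v′ belong to two distinct of these bases, |⟨v, v′⟩| = 1/√(2^{m−1}). -/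
open Finset

noncomputable section

noncomputable instance (n : ℕ) : DecidableEq (Fq n) := Classical.decEq _

open scoped ComplexOrder

/-- The vector `v_{a,λ}` whose `x`-th coordinate is
`(ρ₀ (-1)^{f(ax,0)} + ρ₁ (-1)^{f(ax,1)}) (-1)^{Tr(λ x)} / √(2^{m-1})`,
where `ρ₀ = (1+i)/2` and `ρ₁ = (1-i)/2`. -/
noncomputable def mubVec (m : ℕ) (f : Fq (m - 1) × ZMod 2 → ZMod 2)
    (a lam : Fq (m - 1)) : EuclideanSpace ℂ (Fq (m - 1)) :=
  WithLp.toLp 2 fun x =>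
    (((1 + Complex.I) / 2) * (-1 : ℂ) ^ (f (a * x, 0)).val
      + ((1 - Complex.I) / 2) * (-1 : ℂ) ^ (f (a * x, 1)).val)
    * (-1 : ℂ) ^ (tr1 (m - 1) (lam * x)).val / Real.sqrt (2 ^ (m - 1))

/-!
Write `g_a(x) = ρ₀ (-1)^{f(ax,0)} + ρ₁ (-1)^{f(ax,1)}`. Because `ρ̄₀ = ρ₁`, `ρ₀ ρ₁ = 1/2` and
`ρ₀² = i/2`, the product `conj (g_a x) · g_b x · (-1)^{Tr(c x)}` is `(w₀ - i w₁) / 2`, where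
`w_ε` is the contribution of `x` to the Walsh transform of
`(x₁, x₂) ↦ f(a x₁, x₂) + f(b x₁, x₂ + ε)` at `(c, ε)`. For `a = b` this gives `|g_a| = 1`, so
`B_a` is orthonormal by orthogonality of the characters `x ↦ (-1)^{Tr(c x)}`, and every
coordinate of `v_{a,λ}` has modulus `2^{-(m-1)/2}`. For `a ≠ b`,
`⟨v_{a,λ}, v_{b,λ'}⟩ = (W₀ - i W₁) / 2^m` with `W₀, W₁ = ±2^{m/2}` by cyclic bentness, whose
modulus is `√2 · 2^{m/2} / 2^m = 2^{-(m-1)/2}`.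
-/

lemma Orthonormal.exists_orthonormalBasis_eq {𝕜 ι : Type*} [RCLike 𝕜] [Fintype ι]
    {v : ι → EuclideanSpace 𝕜 ι} (hv : Orthonormal 𝕜 v) :
    ∃ b : OrthonormalBasis ι 𝕜 (EuclideanSpace 𝕜 ι), ⇑b = v :=
  ⟨OrthonormalBasis.mk hv
      (hv.linearIndependent.span_eq_top_of_card_eq_finrank' finrank_euclideanSpace.symm).ge,
    OrthonormalBasis.coe_mk _ _⟩

namespace CyclicBent

open Complex ComplexConjugate

def signChar : AddChar (ZMod 2) ℂ := AddChar.zmodChar 2 (by norm_num : (-1 : ℂ) ^ 2 = 1)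

lemma signChar_one : signChar 1 = -1 := by
  rw [signChar, AddChar.zmodChar_apply, show (1 : ZMod 2).val = 1 from rfl, pow_one]

lemma conj_signChar (t : ZMod 2) : conj (signChar t) = signChar t := by
  rw [← AddChar.map_neg_eq_conj, ZMod.neg_eq_self_mod_two]

lemma intCast_chi (t : ZMod 2) : (chi t : ℂ) = signChar t := by
  simp [chi, signChar, AddChar.zmodChar_apply]

def traceChar (n : ℕ) : AddChar (Fq n) ℂ :=
  signChar.compAddMonoidHom (Algebra.trace (ZMod 2) (Fq n)).toAddMonoidHom

lemma traceChar_apply (n : ℕ) (x : Fq n) : traceChar n x = signChar (tr1 n x) := rfl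

lemma traceChar_ne_one (n : ℕ) : traceChar n ≠ 1 := by
  obtain ⟨x, hx⟩ := Algebra.trace_surjective (ZMod 2) (Fq n) 1
  intro h
  have := congr($h x)
  rw [traceChar_apply, tr1, hx, signChar_one, AddChar.one_apply] at this
  norm_num at this

lemma sum_traceChar_mul (n : ℕ) (c : Fq n) :
    ∑ x, traceChar n (c * x) = if c = 0 then (Fintype.card (Fq n) : ℂ) else 0 := by
  have := AddChar.sum_mulShift c (AddChar.IsPrimitive.of_ne_one (traceChar_ne_one n))
  simp_rw [mul_comm _ c] at this
  exact_mod_cast this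

def mix (e₀ e₁ : ZMod 2) : ℂ := (1 + I) / 2 * signChar e₀ + (1 - I) / 2 * signChar e₁

lemma conj_mix_mul_mix (e₀ e₁ d₀ d₁ : ZMod 2) :
    conj (mix e₀ e₁) * mix d₀ d₁ = (signChar (e₀ + d₀) + signChar (e₁ + d₁)
      - I * (signChar (e₀ + d₁) - signChar (e₁ + d₀))) / 2 := by
  simp only [mix, map_add, map_mul, map_div₀, map_sub, map_one, map_ofNat, conj_I, conj_signChar,
    AddChar.map_add_eq_mul]
  linear_combination (signChar e₀ * signChar d₁ + signChar e₁ * signChar d₀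
    - signChar e₀ * signChar d₀ - signChar e₁ * signChar d₁) / 4 * I_sq

lemma conj_mix_mul_self (e₀ e₁ : ZMod 2) : conj (mix e₀ e₁) * mix e₀ e₁ = 1 := by
  rw [conj_mix_mul_mix, add_comm e₁ e₀]
  simp [CharTwo.add_self_eq_zero]

lemma norm_mix (e₀ e₁ : ZMod 2) : ‖mix e₀ e₁‖ = 1 := by
  have h := conj_mix_mul_self e₀ e₁
  rw [← Complex.normSq_eq_conj_mul_self, Complex.ofReal_eq_one] at h
  rw [Complex.norm_def, h, Real.sqrt_one]

lemma mubVec_apply (m : ℕ) (f : Fq (m - 1) × ZMod 2 → ZMod 2) (a lam x : Fq (m - 1)) :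
    mubVec m f a lam x =
      mix (f (a * x, 0)) (f (a * x, 1)) * traceChar (m - 1) (lam * x) / √(2 ^ (m - 1)) :=
  rfl

lemma inner_mubVec (m : ℕ) (f : Fq (m - 1) × ZMod 2 → ZMod 2) (a b lam lam' : Fq (m - 1)) :
    inner ℂ (mubVec m f a lam) (mubVec m f b lam') =
      (∑ x, conj (mix (f (a * x, 0)) (f (a * x, 1))) * mix (f (b * x, 0)) (f (b * x, 1))
        * traceChar (m - 1) ((lam' - lam) * x)) / 2 ^ (m - 1) := by
  have hsqrt : ((√(2 ^ (m - 1)) : ℝ) : ℂ) * (√(2 ^ (m - 1)) : ℝ) = 2 ^ (m - 1) := by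
    rw [← Complex.ofReal_mul, Real.mul_self_sqrt (by positivity)]
    push_cast; rfl
  rw [PiLp.inner_apply, Finset.sum_div]
  refine Finset.sum_congr rfl fun x _ => ?_
  rw [mubVec_apply, mubVec_apply, RCLike.inner_apply', map_div₀, map_mul, Complex.conj_ofReal,
    ← AddChar.map_neg_eq_conj, sub_mul, sub_eq_neg_add, ← neg_mul, AddChar.map_add_eq_mul,
    div_mul_div_comm, hsqrt]
  ring

lemma orthonormal_mubVec {m : ℕ} (hm : m - 1 ≠ 0) (f : Fq (m - 1) × ZMod 2 → ZMod 2)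
    (a : Fq (m - 1)) : Orthonormal ℂ (mubVec m f a) := by
  rw [orthonormal_iff_ite]
  intro lam lam'
  simp only [inner_mubVec, conj_mix_mul_self, one_mul, sum_traceChar_mul, sub_eq_zero,
    @eq_comm _ lam']
  rw [← Nat.card_eq_fintype_card, GaloisField.card 2 _ hm]
  split_ifs <;> simp

lemma intCast_walsh (n : ℕ) (F : Fq n × ZMod 2 → ZMod 2) (c : Fq n) (ν : ZMod 2) :
    (walsh n F c ν : ℂ) =
      ∑ x, (signChar (F (x, 0)) + signChar (F (x, 1)) * signChar ν) * traceChar n (c * x) := by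
  have sum_bit (g : ZMod 2 → ℂ) : ∑ t, g t = g 0 + g 1 := Fin.sum_univ_two g
  simp only [walsh, Int.cast_sum, intCast_chi, Fintype.sum_prod_type, sum_bit]
  refine Finset.sum_congr rfl fun x _ => ?_
  simp only [AddChar.map_add_eq_mul, traceChar_apply, mul_zero, mul_one, AddChar.map_zero_eq_one]
  ring

-- `x.2 + 0` matches `IsCyclicBent` at `ε = 0`.
lemma sum_conj_mix_mul_mix (n : ℕ) (f : Fq n × ZMod 2 → ZMod 2) (a b c : Fq n) :
    ∑ x, conj (mix (f (a * x, 0)) (f (a * x, 1))) * mix (f (b * x, 0)) (f (b * x, 1))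
        * traceChar n (c * x) =
      (walsh n (fun x => f (a * x.1, x.2) + f (b * x.1, x.2 + 0)) c 0
        - I * walsh n (fun x => f (a * x.1, x.2) + f (b * x.1, x.2 + 1)) c 1) / 2 := by
  rw [intCast_walsh, intCast_walsh, Finset.mul_sum, ← Finset.sum_sub_distrib, Finset.sum_div]
  refine Finset.sum_congr rfl fun x _ => ?_
  simp only [conj_mix_mul_mix, add_zero, zero_add, CharTwo.add_self_eq_zero,
    AddChar.map_zero_eq_one, signChar_one]
  ring

lemma sq_walsh_of_isBent {m : ℕ} (hm : Even m) {F : Fq (m - 1) × ZMod 2 → ZMod 2}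
    (hF : IsBent m F) (c : Fq (m - 1)) (ν : ZMod 2) : (walsh (m - 1) F c ν : ℝ) ^ 2 = 2 ^ m := by
  have hsq : ((2 : ℤ) ^ (m / 2)) ^ 2 = 2 ^ m := by
    rw [← pow_mul, Nat.div_mul_cancel (even_iff_two_dvd.mp hm)]
  rcases hF c ν with h | h <;> rw [h] <;> push_cast [neg_sq] <;> exact_mod_cast hsq

lemma norm_sub_I_mul_div {m : ℕ} (hm : 0 < m) {u w : ℝ} (hu : u ^ 2 = 2 ^ m)
    (hw : w ^ 2 = 2 ^ m) :
    ‖(u - I * w) / 2 / 2 ^ (m - 1)‖ = 1 / √(2 ^ (m - 1)) := by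
  have hm' : (2 : ℝ) ^ m = 2 * 2 ^ (m - 1) := by
    rw [← pow_succ']; congr 1; omega
  have hnorm : ‖(u : ℂ) - I * w‖ = 2 * √(2 ^ (m - 1)) := by
    rw [show (u : ℂ) - I * w = u + (-w : ℝ) * I by push_cast; ring, Complex.norm_add_mul_I, neg_sq,
      hu, hw, hm', show (2 : ℝ) * 2 ^ (m - 1) + 2 * 2 ^ (m - 1) = 2 ^ 2 * 2 ^ (m - 1) by ring,
      Real.sqrt_mul (by positivity), Real.sqrt_sq zero_le_two]
  rw [norm_div, norm_div, hnorm, Complex.norm_two, norm_pow, Complex.norm_two]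
  field_simp
  exact Real.sq_sqrt (by positivity)

lemma norm_inner_single_mubVec (m : ℕ) (f : Fq (m - 1) × ZMod 2 → ZMod 2)
    (a lam y : Fq (m - 1)) :
    ‖inner ℂ (EuclideanSpace.single y (1 : ℂ)) (mubVec m f a lam)‖ = 1 / √(2 ^ (m - 1)) := by
  rw [EuclideanSpace.inner_single_left, map_one, one_mul, mubVec_apply, norm_div, norm_mul,
    norm_mix, AddChar.norm_apply, one_mul, Complex.norm_real, Real.norm_of_nonneg (by positivity)]

end CyclicBent

open CyclicBent in
/-- for a cyclic bent function `f`, each family `B_a = {v_{a,λ}}` is an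
orthonormal basis of `ℂ^{2^{m-1}}`, and together with the standard basis `B_∞` they are
pairwise mutually unbiased. -/
theorem stmt5 (m : ℕ) (hm : Even m) (hm0 : 0 < m)
    (f : Fq (m - 1) × ZMod 2 → ZMod 2) (hf : IsCyclicBent m f) :
    (∀ a : Fq (m - 1),
      ∃ b : OrthonormalBasis (Fq (m - 1)) ℂ (EuclideanSpace ℂ (Fq (m - 1))),
        ∀ lam, b lam = mubVec m f a lam) ∧
    (∀ a a' : Fq (m - 1), a ≠ a' → ∀ lam lam' : Fq (m - 1),
      ‖(@inner ℂ _ _ (mubVec m f a lam) (mubVec m f a' lam'))‖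
        = 1 / Real.sqrt (2 ^ (m - 1))) ∧
    (∀ a lam : Fq (m - 1), ∀ y : Fq (m - 1),
      ‖
          (@inner ℂ _ _ (EuclideanSpace.single y (1 : ℂ)) (mubVec m f a lam))‖
        = 1 / Real.sqrt (2 ^ (m - 1))) := by
  have hm1 : m - 1 ≠ 0 := by obtain ⟨k, rfl⟩ := hm; omega
  refine ⟨fun a => ?_, fun a a' ha lam lam' => ?_, norm_inner_single_mubVec m f⟩
  · obtain ⟨b, hb⟩ := (orthonormal_mubVec hm1 f a).exists_orthonormalBasis_eq
    exact ⟨b, congrFun hb⟩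
  · rw [inner_mubVec, sum_conj_mix_mul_mix, ← Complex.ofReal_intCast, ← Complex.ofReal_intCast]
    exact norm_sub_I_mul_div hm0 (sq_walsh_of_isBent hm (hf a a' ha 0) _ _)
      (sq_walsh_of_isBent hm (hf a a' ha 1) _ _)
end
end

section
/- Let m be an even positive integer and let f be a cyclic bent function on F_{2^{m−1}} × F_2. Let B_∞ be the standard basis of ℂ^{2^{m−1}} and, for a ∈ F_{2^{m−1}}, let B_a = { ( (ρ₀ (−1)^{f(ax,0)} + ρ₁ (−1)^{f(ax,1)}) (−1)^{Tr^{m−1}_1(λ x)} / √(2^{m−1}) )_{x ∈ F_{2^{m−1}}} : λ ∈ F_{2^{m−1}} } with ρ₀ = (1+i)/2, ρ₁ = (1−i)/2. Then C = B_∞ ∪ ⋃_{a ∈ F_{2^{m−1}}} B_a consists of N = 2^{2(m−1)} + 2^{m−1} pairwise distinct unit-norm vectors in ℂ^K with K = 2^{m−1}, and I_max(C) = 1/√(2^{m−1}) = √( (2N − K² − K) / ((N − K)(K + 1)) ); that is, C is a complex-valued (2^{2(m−1)}+2^{m−1}, 2^{m−1}) codebook meeting the complex Levenshtein bound with equality.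 -/
open Finset

noncomputable section

/-- The codebook `C = B_∞ ∪ ⋃_{a ∈ F_{2^{m-1}}} B_a`. -/
noncomputable def codebookMUB (m : ℕ) (f : Fq (m - 1) × ZMod 2 → ZMod 2) :
    Set (EuclideanSpace ℂ (Fq (m - 1))) :=
  (Set.range fun y : Fq (m - 1) => EuclideanSpace.single y (1 : ℂ))
    ∪ ⋃ a : Fq (m - 1), Set.range fun lam : Fq (m - 1) => mubVec m f a lam

/-!
Write `K = 2^(m-1)` and `ρ(u₀, u₁) = ρ₀ (-1)^u₀ + ρ₁ (-1)^u₁`. A direct computation gives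
`conj ρ(u) * ρ(v) = ((-1)^(u₀+v₀) + (-1)^(u₁+v₁) - i ((-1)^(u₀+v₁) - (-1)^(u₁+v₀))) / 2`,
so that `2K ⟪v_{a,λ}, v_{b,μ}⟫ = W₀ - i W₁`, where `W_ε` is the Walsh coefficient at
`(λ+μ, ε)` of `(x₁, x₂) ↦ f(a x₁, x₂) + f(b x₁, x₂ + ε)`. For `a = b` this is
`2 Σₓ (-1)^Tr((λ+μ)x)`, so every `B_a` is orthonormal; for `a ≠ b` cyclic bentness gives
`W₀² = W₁² = 2^m`, hence `|⟪v_{a,λ}, v_{b,μ}⟫| = √(2^(m+1)) / 2K = 1/√K`. Against the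
standard basis the inner products are single coordinates, of modulus `1/√K` because `|ρ| = 1`.
As `1/√K < 1`, the `K + K²` vectors are pairwise distinct.
-/

open Complex ComplexConjugate

def signChar : AddChar (ZMod 2) ℂ where
  toFun v := (-1) ^ v.val
  map_zero_eq_one' := by simp
  map_add_eq_mul' a b := by rw [ZMod.val_add, ← neg_one_pow_eq_pow_mod_two, pow_add]

lemma signChar_apply (v : ZMod 2) : signChar v = (-1) ^ v.val := rfl

lemma signChar_one : signChar 1 = -1 := by simp [signChar_apply, ZMod.val_one]

lemma conj_signChar (v : ZMod 2) : conj (signChar v) = signChar v := by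
  simp [signChar_apply]

lemma norm_signChar (v : ZMod 2) : ‖signChar v‖ = 1 := by
  simp [signChar_apply]

lemma intCast_chi (v : ZMod 2) : (chi v : ℂ) = signChar v := by
  simp [chi, signChar_apply]

def trChar (n : ℕ) : AddChar (Fq n) ℂ :=
  signChar.compAddMonoidHom (Algebra.trace (ZMod 2) (Fq n)).toAddMonoidHom

lemma trChar_apply (n : ℕ) (x : Fq n) : trChar n x = signChar (tr1 n x) := rfl

lemma trChar_ne_one (n : ℕ) : trChar n ≠ 1 := by
  obtain ⟨x, hx⟩ : ∃ x, tr1 n x ≠ 0 := by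
    by_contra! h
    exact one_ne_zero <| (traceForm_nondegenerate (ZMod 2) (Fq n)).1 1 fun x => by
      rw [Algebra.traceForm_apply, one_mul]
      exact h x
  have h1 : tr1 n x = 1 := by generalize tr1 n x = v at hx; revert v; decide
  intro h
  have := DFunLike.congr_fun h x
  rw [trChar_apply, h1, signChar_one, AddChar.one_apply] at this
  norm_num at this

lemma sum_trChar_mul (n : ℕ) (c : Fq n) :
    ∑ x, trChar n (c * x) = if c = 0 then (Fintype.card (Fq n) : ℂ) else 0 := by
  simp_rw [mul_comm c]
  exact_mod_cast AddChar.sum_mulShift c (AddChar.IsPrimitive.of_ne_one (trChar_ne_one n))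

def rho (u v : ZMod 2) : ℂ := (1 + I) / 2 * signChar u + (1 - I) / 2 * signChar v

lemma conj_rho_mul_rho (u₀ u₁ v₀ v₁ : ZMod 2) :
    conj (rho u₀ u₁) * rho v₀ v₁ = (signChar (u₀ + v₀) + signChar (u₁ + v₁)
      - I * (signChar (u₀ + v₁) - signChar (u₁ + v₀))) / 2 := by
  simp only [rho, map_add, map_mul, map_div₀, map_sub, map_one, map_ofNat, conj_I,
    conj_signChar, AddChar.map_add_eq_mul]
  linear_combination (signChar u₀ * signChar v₁ + signChar u₁ * signChar v₀
    - signChar u₀ * signChar v₀ - signChar u₁ * signChar v₁) / 4 * I_sq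

lemma norm_rho (u v : ZMod 2) : ‖rho u v‖ = 1 := by
  have h := conj_rho_mul_rho u v u v
  rw [add_comm v u, sub_self, mul_zero, sub_zero, CharTwo.add_self_eq_zero,
    CharTwo.add_self_eq_zero, AddChar.map_zero_eq_one, ← normSq_eq_conj_mul_self,
    show ((1 : ℂ) + 1) / 2 = (1 : ℝ) by norm_num] at h
  rw [norm_def, Real.sqrt_eq_one]
  exact_mod_cast h

lemma mubVec_apply (m : ℕ) (f : Fq (m - 1) × ZMod 2 → ZMod 2) (a lam x : Fq (m - 1)) :
    mubVec m f a lam x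
      = rho (f (a * x, 0)) (f (a * x, 1)) * trChar (m - 1) (lam * x) / √(2 ^ (m - 1)) :=
  rfl

lemma walsh_eq_sum (n : ℕ) (g : Fq n × ZMod 2 → ZMod 2) (c : Fq n) (ν : ZMod 2) :
    (walsh n g c ν : ℂ)
      = ∑ x, trChar n (c * x) * (signChar (g (x, 0)) + signChar ν * signChar (g (x, 1))) := by
  simp only [walsh, Int.cast_sum, intCast_chi, Fintype.sum_prod_type]
  refine sum_congr rfl fun x _ => ?_
  rw [show (univ : Finset (ZMod 2)) = {0, 1} from rfl, sum_pair zero_ne_one]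
  simp only [AddChar.map_add_eq_mul, trChar_apply, mul_zero, mul_one, AddChar.map_zero_eq_one]
  ring

lemma sqrt_two_pow_mul_self (n : ℕ) : (√(2 ^ n) : ℂ) * √(2 ^ n) = 2 ^ n := by
  rw [← ofReal_mul, Real.mul_self_sqrt (by positivity)]
  push_cast; rfl

lemma conj_trChar (n : ℕ) (x : Fq n) : conj (trChar n x) = trChar n x := conj_signChar _

lemma inner_mubVec_mul_eq_walsh (m : ℕ) (f : Fq (m - 1) × ZMod 2 → ZMod 2)
    (a b lam mu : Fq (m - 1)) :
    inner ℂ (mubVec m f a lam) (mubVec m f b mu) * (2 * 2 ^ (m - 1))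
      = walsh (m - 1) (fun x => f (a * x.1, x.2) + f (b * x.1, x.2 + 0)) (lam + mu) 0
        - I * walsh (m - 1) (fun x => f (a * x.1, x.2) + f (b * x.1, x.2 + 1)) (lam + mu) 1 := by
  rw [walsh_eq_sum, walsh_eq_sum, mul_sum, ← sum_sub_distrib, PiLp.inner_apply, sum_mul]
  refine sum_congr rfl fun x _ => ?_
  have hρ := conj_rho_mul_rho (f (a * x, 0)) (f (a * x, 1)) (f (b * x, 0)) (f (b * x, 1))
  set s : ℂ := ((√(2 ^ (m - 1)) : ℝ) : ℂ)
  have hs0 : s ≠ 0 := by simp [s]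
  have hcancel (p q : ℂ) : p / s * (q / s) * (2 * (s * s)) = 2 * (q * p) := by field_simp
  rw [RCLike.inner_apply, mubVec_apply, mubVec_apply, add_mul, AddChar.map_add_eq_mul,
    ← sqrt_two_pow_mul_self]
  simp only [map_div₀, map_mul, conj_ofReal, conj_trChar, add_zero, zero_add,
    CharTwo.add_self_eq_zero, AddChar.map_zero_eq_one, signChar_one]
  rw [hcancel]
  linear_combination (2 * trChar (m - 1) (lam * x) * trChar (m - 1) (mu * x)) * hρ

lemma sub_one_ne_zero_of_even {m : ℕ} (hm : Even m) (hm0 : 0 < m) : m - 1 ≠ 0 := by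
  obtain ⟨k, rfl⟩ := hm
  omega

lemma card_Fq {n : ℕ} (hn : n ≠ 0) : Fintype.card (Fq n) = 2 ^ n := by
  rw [Fintype.card_eq_nat_card]
  exact GaloisField.card 2 n hn

lemma inner_mubVec_same_basis {m : ℕ} (hm : m - 1 ≠ 0) (f : Fq (m - 1) × ZMod 2 → ZMod 2)
    (a lam mu : Fq (m - 1)) :
    inner ℂ (mubVec m f a lam) (mubVec m f a mu) = if lam = mu then 1 else 0 := by
  have h := inner_mubVec_mul_eq_walsh m f a a lam mu
  have hcancel (x : Fq (m - 1)) : signChar (f (a * x, 0) + f (a * x, 1))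
      + -1 * signChar (f (a * x, 1) + f (a * x, 0)) = 0 := by
    rw [add_comm (f (a * x, 1))]; ring
  simp only [walsh_eq_sum, add_zero, zero_add, CharTwo.add_self_eq_zero, AddChar.map_zero_eq_one,
    signChar_one, one_mul, hcancel, mul_zero, sum_const_zero, sub_zero] at h
  rw [← sum_mul, sum_trChar_mul, card_Fq hm] at h
  simp only [CharTwo.add_eq_zero] at h
  have h2K : (2 * 2 ^ (m - 1) : ℂ) ≠ 0 := mul_ne_zero two_ne_zero (pow_ne_zero _ two_ne_zero)
  split_ifs at h ⊢
  · exact mul_right_cancel₀ h2K (h.trans (by push_cast; ring))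
  · simpa [h2K] using h

lemma norm_mubVec {m : ℕ} (hm : m - 1 ≠ 0) (f : Fq (m - 1) × ZMod 2 → ZMod 2)
    (a lam : Fq (m - 1)) : ‖mubVec m f a lam‖ = 1 := by
  have h := inner_mubVec_same_basis hm f a lam lam
  have h' : ‖mubVec m f a lam‖ ^ 2 = 1 := by
    rw [@norm_sq_eq_re_inner ℂ, h, if_pos rfl, RCLike.one_re]
  exact (pow_eq_one_iff_of_nonneg (norm_nonneg _) two_ne_zero).1 h'

lemma norm_mubVec_apply (m : ℕ) (f : Fq (m - 1) × ZMod 2 → ZMod 2) (a lam x : Fq (m - 1)) :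
    ‖mubVec m f a lam x‖ = 1 / √(2 ^ (m - 1)) := by
  rw [mubVec_apply, norm_div, norm_mul, norm_rho, trChar_apply, norm_signChar, one_mul,
    norm_real, Real.norm_of_nonneg (Real.sqrt_nonneg _)]

lemma IsBent.sq_walsh {m : ℕ} {g : Fq (m - 1) × ZMod 2 → ZMod 2} (hm : Even m)
    (hg : IsBent m g) (lam : Fq (m - 1)) (nu : ZMod 2) :
    (walsh (m - 1) g lam nu : ℝ) ^ 2 = 2 ^ m := by
  rcases hg lam nu with h | h <;>
    simp [h, ← pow_mul, Nat.div_mul_cancel hm.two_dvd]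

lemma sq_norm_intCast_sub_I_mul (p q : ℤ) :
    ‖(p : ℂ) - I * q‖ ^ 2 = (p : ℝ) ^ 2 + (q : ℝ) ^ 2 := by
  rw [Complex.sq_norm, normSq_apply]
  simp
  ring

lemma norm_inner_mubVec_of_ne {m : ℕ} (hm : Even m) (hm0 : 0 < m)
    {f : Fq (m - 1) × ZMod 2 → ZMod 2} (hf : IsCyclicBent m f) {a b : Fq (m - 1)} (hab : a ≠ b)
    (lam mu : Fq (m - 1)) :
    ‖inner ℂ (mubVec m f a lam) (mubVec m f b mu)‖ = 1 / √(2 ^ (m - 1)) := by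
  have h := congrArg (‖·‖ ^ 2) (inner_mubVec_mul_eq_walsh m f a b lam mu)
  simp only [sq_norm_intCast_sub_I_mul, (hf a b hab 0).sq_walsh hm, (hf a b hab 1).sq_walsh hm,
    norm_mul, norm_pow, Complex.norm_ofNat, mul_pow] at h
  have h2m : (2 : ℝ) ^ m = 2 * 2 ^ (m - 1) := by rw [← pow_succ', Nat.sub_add_cancel hm0]
  have hsq : ‖inner ℂ (mubVec m f a lam) (mubVec m f b mu)‖ ^ 2 = 1 / 2 ^ (m - 1) := by
    have hK : (4 * 2 ^ (m - 1) : ℝ) ≠ 0 := by positivity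
    rw [eq_div_iff (by positivity)]
    exact mul_left_cancel₀ hK (by rw [h2m] at h; linear_combination h)
  rw [← Real.sqrt_sq (norm_nonneg _), hsq, one_div, one_div, Real.sqrt_inv]

lemma norm_inner_single_mubVec (m : ℕ) (f : Fq (m - 1) × ZMod 2 → ZMod 2)
    (y a lam : Fq (m - 1)) :
    ‖inner ℂ (EuclideanSpace.single y (1 : ℂ)) (mubVec m f a lam)‖ = 1 / √(2 ^ (m - 1)) := by
  rw [EuclideanSpace.inner_single_left, map_one, one_mul, norm_mubVec_apply]

lemma one_div_sqrt_two_pow_lt_one {n : ℕ} (hn : n ≠ 0) : 1 / √(2 ^ n) < 1 := by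
  rw [div_lt_one (by positivity), Real.lt_sqrt zero_le_one, one_pow]
  exact one_lt_pow₀ one_lt_two hn

lemma levenshtein_bound_eq {K N : ℝ} (hK : 0 < K) (hN : N = K ^ 2 + K) :
    1 / √K = √((2 * N - K ^ 2 - K) / ((N - K) * (K + 1))) := by
  have hd : (N - K) * (K + 1) ≠ 0 := by rw [hN]; ring_nf; positivity
  have h : (2 * N - K ^ 2 - K) / ((N - K) * (K + 1)) = K⁻¹ := by
    rw [div_eq_iff hd, hN]
    field_simp
    ring
  rw [h, Real.sqrt_inv, one_div]

def codeword (m : ℕ) (f : Fq (m - 1) × ZMod 2 → ZMod 2) :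
    Fq (m - 1) ⊕ (Fq (m - 1) × Fq (m - 1)) → EuclideanSpace ℂ (Fq (m - 1)) :=
  Sum.elim (fun y => EuclideanSpace.single y 1) fun p => mubVec m f p.1 p.2

lemma range_codeword (m : ℕ) (f : Fq (m - 1) × ZMod 2 → ZMod 2) :
    Set.range (codeword m f) = codebookMUB m f := by
  ext
  simp [codeword, codebookMUB]

lemma norm_codeword {m : ℕ} (hm : m - 1 ≠ 0) (f : Fq (m - 1) × ZMod 2 → ZMod 2)
    (i : Fq (m - 1) ⊕ (Fq (m - 1) × Fq (m - 1))) : ‖codeword m f i‖ = 1 := by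
  rcases i with y | ⟨a, lam⟩
  · simp [codeword]
  · exact norm_mubVec hm f a lam

lemma norm_inner_codeword_le {m : ℕ} (hm : Even m) (hm0 : 0 < m)
    {f : Fq (m - 1) × ZMod 2 → ZMod 2} (hf : IsCyclicBent m f)
    {i j : Fq (m - 1) ⊕ (Fq (m - 1) × Fq (m - 1))} (hij : i ≠ j) :
    ‖inner ℂ (codeword m f i) (codeword m f j)‖ ≤ 1 / √(2 ^ (m - 1)) := by
  rcases i with y | ⟨a, lam⟩ <;> rcases j with y' | ⟨b, mu⟩
  · have hy : y' ≠ y := fun h => hij (by rw [h])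
    simp [codeword, EuclideanSpace.inner_single_left, hy]
  · exact (norm_inner_single_mubVec m f y b mu).le
  · rw [← inner_conj_symm, RCLike.norm_conj]
    exact (norm_inner_single_mubVec m f y' a lam).le
  · by_cases hab : a = b
    · subst hab
      have hlm : lam ≠ mu := fun h => hij (by rw [h])
      simp [codeword, inner_mubVec_same_basis (sub_one_ne_zero_of_even hm hm0) f a lam mu, hlm]
    · exact (norm_inner_mubVec_of_ne hm hm0 hf hab lam mu).le

lemma codeword_injective {m : ℕ} (hm : Even m) (hm0 : 0 < m)
    {f : Fq (m - 1) × ZMod 2 → ZMod 2} (hf : IsCyclicBent m f) :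
    Function.Injective (codeword m f) := by
  have hm1 := sub_one_ne_zero_of_even hm hm0
  intro i j h
  by_contra hij
  have hle := norm_inner_codeword_le hm hm0 hf hij
  have hone : ‖inner ℂ (codeword m f i) (codeword m f j)‖ = 1 := by
    rw [h, inner_self_eq_norm_sq_to_K, norm_codeword hm1]
    simp
  exact (one_div_sqrt_two_pow_lt_one hm1).not_ge (hone ▸ hle)

/-- the codebook obtained from the complete set of MUBs is an optimal
complex `(2^{2(m-1)}+2^{m-1}, 2^{m-1})` codebook meeting the complex Levenshtein bound
with equality. -/
theorem stmt7 (m : ℕ) (hm : Even m) (hm0 : 0 < m)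
    (f : Fq (m - 1) × ZMod 2 → ZMod 2) (hf : IsCyclicBent m f) :
    (codebookMUB m f).ncard = 2 ^ (2 * (m - 1)) + 2 ^ (m - 1) ∧
    (∀ c ∈ codebookMUB m f, ‖c‖ = 1) ∧
    (∀ c ∈ codebookMUB m f, ∀ c' ∈ codebookMUB m f, c ≠ c' →
      ‖(@inner ℂ _ _ c c')‖ ≤ 1 / Real.sqrt (2 ^ (m - 1))) ∧
    (∃ c ∈ codebookMUB m f, ∃ c' ∈ codebookMUB m f, c ≠ c' ∧
      ‖(@inner ℂ _ _ c c')‖ = 1 / Real.sqrt (2 ^ (m - 1))) ∧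
    1 / Real.sqrt (2 ^ (m - 1))
      = Real.sqrt
          ((2 * (2 ^ (2 * (m - 1)) + 2 ^ (m - 1) : ℝ)
              - (2 ^ (m - 1) : ℝ) ^ 2 - 2 ^ (m - 1))
            / (((2 ^ (2 * (m - 1)) + 2 ^ (m - 1) : ℝ) - 2 ^ (m - 1))
                * (2 ^ (m - 1) + 1))) := by
  have hm1 := sub_one_ne_zero_of_even hm hm0
  have hinj := codeword_injective hm hm0 hf
  rw [← range_codeword]
  refine ⟨?_, ?_, ?_, ?_, levenshtein_bound_eq (by positivity) (by ring)⟩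
  · rw [Set.ncard_range_of_injective hinj, Nat.card_sum, Nat.card_prod, GaloisField.card 2 _ hm1]
    ring
  · rintro _ ⟨i, rfl⟩
    exact norm_codeword hm1 f i
  · rintro _ ⟨i, rfl⟩ _ ⟨j, rfl⟩ hij
    exact norm_inner_codeword_le hm hm0 hf (ne_of_apply_ne _ hij)
  · exact ⟨_, ⟨Sum.inl 0, rfl⟩, _, ⟨Sum.inr (0, 0), rfl⟩, hinj.ne Sum.inl_ne_inr,
      norm_inner_single_mubVec m f 0 0 0⟩
end
end

section
/- Let m be an even positive integer and let g and h be bent functions on F_{2^{m−1}} × F_2 such that Σ_{μ ∈ F_{2^{m−1}}} W_g(μ,0) = 2^m, Σ_{μ ∈ F_{2^{m−1}}} W_h(μ,1) = 0, and Σ_{μ ∈ F_{2^{m−1}}} W_g(μ,0) · W_h(μ,1) = 0. For ε₁, ε₂ ∈ F_2 define J_{g,h}(ε₁,ε₂) = { μ ∈ F_{2^{m−1}} : W_g(μ,0) = (−1)^{ε₁} 2^{m/2} and W_h(μ,1) = (−1)^{ε₂} 2^{m/2} }. Then #J_{g,h}(ε₁,ε₂) = 2^{m−3} + (−1)^{ε₁}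 2^{(m−4)/2}. -/
open Finset

noncomputable section

lemma four_split {α : Type*} [Fintype α] (P Q : α → Prop) [DecidablePred P] [DecidablePred Q]
    (f : α → ℤ) (v₁ v₂ v₃ v₄ : ℤ)
    (h₁ : ∀ μ, P μ → Q μ → f μ = v₁) (h₂ : ∀ μ, P μ → ¬Q μ → f μ = v₂)
    (h₃ : ∀ μ, ¬P μ → Q μ → f μ = v₃) (h₄ : ∀ μ, ¬P μ → ¬Q μ → f μ = v₄) :
    ∑ μ, f μ = ((univ.filter fun μ => P μ ∧ Q μ).card : ℤ) * v₁
      + ((univ.filter fun μ => P μ ∧ ¬Q μ).card : ℤ) * v₂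
      + ((univ.filter fun μ => ¬P μ ∧ Q μ).card : ℤ) * v₃
      + ((univ.filter fun μ => ¬P μ ∧ ¬Q μ).card : ℤ) * v₄ := by
  have key : ∀ (R : α → Prop) [DecidablePred R] (v : ℤ), (∀ μ, R μ → f μ = v) →
      ∑ μ ∈ univ.filter R, f μ = ((univ.filter R).card : ℤ) * v := by
    intro R _ v hv
    rw [Finset.sum_congr rfl (fun μ hμ => hv μ (mem_filter.mp hμ).2), Finset.sum_const,
      nsmul_eq_mul]
  rw [← Finset.sum_filter_add_sum_filter_not univ P f,
    ← Finset.sum_filter_add_sum_filter_not (univ.filter P) Q f,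
    ← Finset.sum_filter_add_sum_filter_not (univ.filter fun μ => ¬ P μ) Q f,
    Finset.filter_filter, Finset.filter_filter, Finset.filter_filter, Finset.filter_filter,
    key _ v₁ (fun μ hμ => h₁ μ hμ.1 hμ.2), key _ v₂ (fun μ hμ => h₂ μ hμ.1 hμ.2),
    key _ v₃ (fun μ hμ => h₃ μ hμ.1 hμ.2), key _ v₄ (fun μ hμ => h₄ μ hμ.1 hμ.2)]
  ring

lemma final_calc (m k N : ℕ) (hk : m = k + k) (hk1 : 1 ≤ k) (s : ℝ)
    (hN : 4 * (N : ℝ) = 2 ^ (m - 1) + s * 2 ^ (m / 2)) :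
    (N : ℝ) = (2 : ℝ) ^ ((m : ℝ) - 3) + s * (2 : ℝ) ^ (((m : ℝ) - 4) / 2) := by
  subst hk
  have h2 : (0 : ℝ) < 2 := by norm_num
  have e1 : (2 : ℝ) ^ (((k + k : ℕ) : ℝ) - 3) = 2 ^ (k + k) / 8 := by
    rw [Real.rpow_sub h2, Real.rpow_natCast,
      show (3 : ℝ) = ((3 : ℕ) : ℝ) by norm_num, Real.rpow_natCast]
    norm_num
  have e2 : (2 : ℝ) ^ ((((k + k : ℕ) : ℝ) - 4) / 2) = 2 ^ k / 4 := by
    rw [show ((((k + k : ℕ) : ℝ) - 4) / 2) = ((k : ℕ) : ℝ) - 2 by push_cast; ring,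
      Real.rpow_sub h2, Real.rpow_natCast,
      show (2 : ℝ) = ((2 : ℕ) : ℝ) by norm_num, Real.rpow_natCast]
    norm_num
  have e3 : (2 : ℝ) ^ (k + k - 1) * 2 = 2 ^ (k + k) := by
    rw [← pow_succ]
    congr 1
    omega
  have e4 : (k + k) / 2 = k := by omega
  rw [e1, e2]
  rw [e4] at hN
  nlinarith [hN, e3]

/-- counting the Walsh signs of a pair of bent functions `(g,h)`
satisfying the three sum conditions. -/
theorem stmt9 (m : ℕ) (hm : Even m) (hm0 : 0 < m)
    (g h : Fq (m - 1) × ZMod 2 → ZMod 2) (hg : IsBent m g) (hh : IsBent m h)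
    (h1 : ∑ μ : Fq (m - 1), walsh (m - 1) g μ 0 = 2 ^ m)
    (h2 : ∑ μ : Fq (m - 1), walsh (m - 1) h μ 1 = 0)
    (h3 : ∑ μ : Fq (m - 1), walsh (m - 1) g μ 0 * walsh (m - 1) h μ 1 = 0)
    (ε₁ ε₂ : ZMod 2) :
    ((Finset.univ.filter fun μ : Fq (m - 1) =>
        walsh (m - 1) g μ 0 = (-1 : ℤ) ^ ε₁.val * 2 ^ (m / 2) ∧
        walsh (m - 1) h μ 1 = (-1 : ℤ) ^ ε₂.val * 2 ^ (m / 2)).card : ℝ)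
      = (2 : ℝ) ^ ((m : ℝ) - 3) + (-1 : ℝ) ^ ε₁.val * (2 : ℝ) ^ (((m : ℝ) - 4) / 2) := by
  classical
  obtain ⟨k, hk⟩ := hm
  have hk1 : 1 ≤ k := by omega
  set c : ℤ := 2 ^ (m / 2) with hc
  have hcpos : (0 : ℤ) < c := by positivity
  set P : Fq (m - 1) → Prop := fun μ => walsh (m - 1) g μ 0 = c with hP
  set Q : Fq (m - 1) → Prop := fun μ => walsh (m - 1) h μ 1 = c with hQ
  have hPneg : ∀ μ, ¬ P μ → walsh (m - 1) g μ 0 = -c := fun μ hμ => (hg μ 0).resolve_left hμ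
  have hQneg : ∀ μ, ¬ Q μ → walsh (m - 1) h μ 1 = -c := fun μ hμ => (hh μ 1).resolve_left hμ
  set a := (univ.filter fun μ : Fq (m - 1) => P μ ∧ Q μ).card with ha
  set b := (univ.filter fun μ : Fq (m - 1) => P μ ∧ ¬ Q μ).card with hb
  set a' := (univ.filter fun μ : Fq (m - 1) => ¬ P μ ∧ Q μ).card with ha'
  set b' := (univ.filter fun μ : Fq (m - 1) => ¬ P μ ∧ ¬ Q μ).card with hb'
  have hcard : Fintype.card (Fq (m - 1)) = 2 ^ (m - 1) := by
    rw [← Nat.card_eq_fintype_card]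
    exact GaloisField.card 2 (m - 1) (by omega)
  have E1 : (a : ℤ) + b + a' + b' = 2 ^ (m - 1) := by
    have := four_split P Q (fun _ => (1 : ℤ)) 1 1 1 1
      (fun _ _ _ => rfl) (fun _ _ _ => rfl) (fun _ _ _ => rfl) (fun _ _ _ => rfl)
    simp only [Finset.sum_const, nsmul_eq_mul, mul_one, card_univ, hcard] at this
    push_cast at this ⊢
    linarith
  have E2 : (a : ℤ) * c + b * c + a' * (-c) + b' * (-c) = 2 ^ m := by
    rw [← h1]
    exact (four_split P Q (fun μ => walsh (m - 1) g μ 0) c c (-c) (-c)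
      (fun μ hμ _ => hμ) (fun μ hμ _ => hμ) (fun μ hμ _ => hPneg μ hμ)
      (fun μ hμ _ => hPneg μ hμ)).symm
  have E3 : (a : ℤ) * c + b * (-c) + a' * c + b' * (-c) = 0 := by
    rw [← h2]
    exact (four_split P Q (fun μ => walsh (m - 1) h μ 1) c (-c) c (-c)
      (fun μ _ hμ => hμ) (fun μ _ hμ => hQneg μ hμ) (fun μ _ hμ => hμ)
      (fun μ _ hμ => hQneg μ hμ)).symm
  have E4 : (a : ℤ) * (c * c) + b * (-(c * c)) + a' * (-(c * c)) + b' * (c * c) = 0 := by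
    rw [← h3]
    exact (four_split P Q (fun μ => walsh (m - 1) g μ 0 * walsh (m - 1) h μ 1)
      (c * c) (-(c * c)) (-(c * c)) (c * c)
      (fun μ hu hv => by
        have hu' : walsh (m - 1) g μ 0 = c := hu
        have hv' : walsh (m - 1) h μ 1 = c := hv
        show walsh (m - 1) g μ 0 * walsh (m - 1) h μ 1 = c * c
        rw [hu', hv'])
      (fun μ hu hv => by
        have hu' : walsh (m - 1) g μ 0 = c := hu
        have hv' := hQneg μ hv
        show walsh (m - 1) g μ 0 * walsh (m - 1) h μ 1 = -(c * c)
        rw [hu', hv']; ring)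
      (fun μ hu hv => by
        have hu' := hPneg μ hu
        have hv' : walsh (m - 1) h μ 1 = c := hv
        show walsh (m - 1) g μ 0 * walsh (m - 1) h μ 1 = -(c * c)
        rw [hu', hv']; ring)
      (fun μ hu hv => by
        have hu' := hPneg μ hu
        have hv' := hQneg μ hv
        show walsh (m - 1) g μ 0 * walsh (m - 1) h μ 1 = c * c
        rw [hu', hv']; ring)).symm
  have hcc : c * c = 2 ^ m := by
    rw [hc, ← pow_add]
    congr 1
    omega
  have e2' : (a : ℤ) + b - a' - b' = c := by
    have : c * ((a : ℤ) + b - a' - b') = c * c := by rw [hcc]; linear_combination E2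
    exact mul_left_cancel₀ hcpos.ne' this
  have e3' : (a : ℤ) - b + a' - b' = 0 := by
    have : c * ((a : ℤ) - b + a' - b') = c * 0 := by linear_combination E3
    exact mul_left_cancel₀ hcpos.ne' this
  have e4' : (a : ℤ) - b - a' + b' = 0 := by
    have hcc0 : (0 : ℤ) < c * c := by positivity
    have : (c * c) * ((a : ℤ) - b - a' + b') = (c * c) * 0 := by linear_combination E4
    exact mul_left_cancel₀ hcc0.ne' this
  have Ha : 4 * (a : ℤ) = 2 ^ (m - 1) + c := by linarith
  have Hb : 4 * (b : ℤ) = 2 ^ (m - 1) + c := by linarith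
  have Ha' : 4 * (a' : ℤ) = 2 ^ (m - 1) - c := by linarith
  have Hb' : 4 * (b' : ℤ) = 2 ^ (m - 1) - c := by linarith
  have cast_eq : ∀ (N : ℕ) (s : ℤ), 4 * (N : ℤ) = 2 ^ (m - 1) + s * c →
      (N : ℝ) = (2 : ℝ) ^ ((m : ℝ) - 3) + (s : ℝ) * (2 : ℝ) ^ (((m : ℝ) - 4) / 2) := by
    intro N s hN
    apply final_calc m k N hk hk1 (s : ℝ)
    rw [hc] at hN
    exact_mod_cast hN
  have hv1 : ε₁.val = 0 ∨ ε₁.val = 1 := by have := ZMod.val_lt ε₁; omega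
  have hv2 : ε₂.val = 0 ∨ ε₂.val = 1 := by have := ZMod.val_lt ε₂; omega
  have negP : ∀ μ, walsh (m - 1) g μ 0 = -c → ¬ P μ := by
    intro μ hμ hPμ
    have h' : walsh (m - 1) g μ 0 = c := hPμ
    have : c = -c := h'.symm.trans hμ
    linarith
  have negQ : ∀ μ, walsh (m - 1) h μ 1 = -c → ¬ Q μ := by
    intro μ hμ hQμ
    have h' : walsh (m - 1) h μ 1 = c := hQμ
    have : c = -c := h'.symm.trans hμ
    linarith
  rcases hv1 with hε1 | hε1 <;> rcases hv2 with hε2 | hε2 <;> rw [hε1, hε2] <;> norm_num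
  · rw [show (univ.filter fun μ : Fq (m - 1) =>
        walsh (m - 1) g μ 0 = c ∧ walsh (m - 1) h μ 1 = c)
        = univ.filter fun μ : Fq (m - 1) => P μ ∧ Q μ from
      Finset.filter_congr (fun μ _ => Iff.rfl), ← ha]
    have := cast_eq a 1 (by linarith)
    simpa using this
  · rw [show (univ.filter fun μ : Fq (m - 1) =>
        walsh (m - 1) g μ 0 = c ∧ walsh (m - 1) h μ 1 = -c)
        = univ.filter fun μ : Fq (m - 1) => P μ ∧ ¬ Q μ from
      Finset.filter_congr (fun μ _ =>
        ⟨fun ⟨u, v⟩ => ⟨u, negQ μ v⟩, fun ⟨u, v⟩ => ⟨u, hQneg μ v⟩⟩), ← hb]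
    have := cast_eq b 1 (by linarith)
    simpa using this
  · rw [show (univ.filter fun μ : Fq (m - 1) =>
        walsh (m - 1) g μ 0 = -c ∧ walsh (m - 1) h μ 1 = c)
        = univ.filter fun μ : Fq (m - 1) => ¬ P μ ∧ Q μ from
      Finset.filter_congr (fun μ _ =>
        ⟨fun ⟨u, v⟩ => ⟨negP μ u, v⟩, fun ⟨u, v⟩ => ⟨hPneg μ u, v⟩⟩), ← ha']
    have := cast_eq a' (-1) (by linarith)
    simpa using this
  · rw [show (univ.filter fun μ : Fq (m - 1) =>
        walsh (m - 1) g μ 0 = -c ∧ walsh (m - 1) h μ 1 = -c)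
        = univ.filter fun μ : Fq (m - 1) => ¬ P μ ∧ ¬ Q μ from
      Finset.filter_congr (fun μ _ =>
        ⟨fun ⟨u, v⟩ => ⟨negP μ u, negQ μ v⟩, fun ⟨u, v⟩ => ⟨hPneg μ u, hQneg μ v⟩⟩), ← hb']
    have := cast_eq b' (-1) (by linarith)
    simpa using this
end
end

section
/- Let m be an even positive integer and let f be a cyclic bent function on F_{2^{m−1}} × F_2. Then both x ↦ f(x,0) and x ↦ f(x,1) are cyclic semi-bent functions on F_{2^{m−1}}; that is, for all a ≠ b in F_{2^{m−1}} and each fixed ε ∈ F_2, the function x ↦ f(a x, ε) + f(b x, ε) is semi-bent. -/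
open Finset

noncomputable section

/-- Walsh transform of a Boolean function on `F_{2^n}`. -/
noncomputable def walsh1 (n : ℕ) (g : Fq n → ZMod 2) (lam : Fq n) : ℤ :=
  ∑ x : Fq n, chi (g x + tr1 n (lam * x))

/-- A Boolean function on `F_{2^n}` (`n` odd) is semi-bent if its Walsh transform takes
only the values `0` and `± 2^{(n+1)/2}`. -/
def IsSemiBent (n : ℕ) (g : Fq n → ZMod 2) : Prop :=
  ∀ lam : Fq n,
    walsh1 n g lam = 0 ∨ walsh1 n g lam = 2 ^ ((n + 1) / 2) ∨
      walsh1 n g lam = -(2 ^ ((n + 1) / 2))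

lemma sum_zmod2 (F : ZMod 2 → ℤ) : ∑ x, F x = F 0 + F 1 := Fin.sum_univ_two F

lemma chi_add_one : ∀ a : ZMod 2, chi (a + 1) = - chi a := by decide

/-- from a cyclic bent function `f` on `F_{2^{m-1}} × F_2`, both
`x ↦ f(x,0)` and `x ↦ f(x,1)` are cyclic semi-bent on `F_{2^{m-1}}`. -/
theorem stmt18 (m : ℕ) (hm : Even m) (hm0 : 0 < m)
    (f : Fq (m - 1) × ZMod 2 → ZMod 2) (hf : IsCyclicBent m f) :
    ∀ ε : ZMod 2, ∀ a b : Fq (m - 1), a ≠ b →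
      IsSemiBent (m - 1) fun x => f (a * x, ε) + f (b * x, ε) := by
  intro ε a b hab lam
  have key0 := hf a b hab 0 lam 0
  have key1 := hf a b hab 0 lam 1
  set W0 := walsh1 (m - 1) (fun x => f (a * x, 0) + f (b * x, 0)) lam with hW0
  set W1 := walsh1 (m - 1) (fun x => f (a * x, 1) + f (b * x, 1)) lam with hW1
  have e0 : walsh (m - 1) (fun x => f (a * x.1, x.2) + f (b * x.1, x.2 + 0)) lam 0
      = W0 + W1 := by
    rw [walsh, Fintype.sum_prod_type, hW0, hW1, walsh1, walsh1, ← Finset.sum_add_distrib]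
    refine Finset.sum_congr rfl fun x _ => ?_
    rw [sum_zmod2]
    simp [add_zero, mul_zero]
  have e1 : walsh (m - 1) (fun x => f (a * x.1, x.2) + f (b * x.1, x.2 + 0)) lam 1
      = W0 - W1 := by
    rw [walsh, Fintype.sum_prod_type, hW0, hW1, walsh1, walsh1, ← Finset.sum_sub_distrib]
    refine Finset.sum_congr rfl fun x _ => ?_
    rw [sum_zmod2]
    simp only [add_zero, mul_zero, mul_one, one_mul]
    rw [chi_add_one]
    ring
  rw [e0] at key0
  rw [e1] at key1
  have hexp : (m - 1 + 1) / 2 = m / 2 := by omega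
  have hε : ε = 0 ∨ ε = 1 := (by decide : ∀ e : ZMod 2, e = 0 ∨ e = 1) ε
  set P : ℤ := 2 ^ (m / 2) with hP
  rcases hε with rfl | rfl
  · show W0 = 0 ∨ W0 = 2 ^ ((m - 1 + 1) / 2) ∨ W0 = -(2 ^ ((m - 1 + 1) / 2))
    rw [hexp]
    rcases key0 with h0 | h0 <;> rcases key1 with h1 | h1 <;> omega
  · show W1 = 0 ∨ W1 = 2 ^ ((m - 1 + 1) / 2) ∨ W1 = -(2 ^ ((m - 1 + 1) / 2))
    rw [hexp]
    rcases key0 with h0 | h0 <;> rcases key1 with h1 | h1 <;> omega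
end
end
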